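/- arXiv:2507.21911 — 5 statements merged into one kernel-verified Lean document; each statement's English description precedes it below -/
import Mathlib

section
/- Let n ≥ 1, let J be the n×n nilpotent Jordan block (with 1's on the superdiagonal), let u ∈ 𝔽^n be a column vector and v ∈ 𝔽^n a row vector over an algebraically closed field 𝔽 of characteristic 0. If the values y_i := v·J^{i-1}·u for i = 1,…,n satisfy y_n ≠ 0, then there exists g ∈ GL_n(𝔽) with g·J·g⁻¹ = J, g·u = (y_1,…,y_n)ᵗ, and v·g⁻¹ = (1,0,…,0). -/
open Matrix Finset

/-- The `n×n` nilpotent Jordan block, with `1`'s on the superdiagonal. -/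
def Jmat (𝔽 : Type*) [Field 𝔽] (n : ℕ) : Matrix (Fin n) (Fin n) 𝔽 :=
  Matrix.of fun i j => if (i : ℕ) + 1 = (j : ℕ) then 1 else 0

section Aux

variable {𝔽 : Type*} [Field 𝔽] {n : ℕ}

lemma Jmat_apply (i j : Fin n) :
    Jmat 𝔽 n i j = if (i : ℕ) + 1 = (j : ℕ) then 1 else 0 := rfl

/-- Extend a vector on `Fin n` to `ℕ` by zero. -/
def extv (f : Fin n → 𝔽) (k : ℕ) : 𝔽 := if h : k < n then f ⟨k, h⟩ else 0

lemma extv_lt (f : Fin n → 𝔽) {k : ℕ} (h : k < n) : extv f k = f ⟨k, h⟩ := dif_pos h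

lemma extv_ge (f : Fin n → 𝔽) {k : ℕ} (h : ¬ k < n) : extv f k = 0 := dif_neg h

lemma sum_indicator_left (f : Fin n → 𝔽) (m : ℕ) :
    ∑ x : Fin n, (if m = (x : ℕ) then (1:𝔽) else 0) * f x = extv f m := by
  by_cases h : m < n
  · rw [extv_lt f h, Finset.sum_eq_single (⟨m, h⟩ : Fin n)]
    · simp
    · intro b _ hb
      have : m ≠ (b : ℕ) := fun hc => hb (Fin.ext hc.symm)
      rw [if_neg this, zero_mul]
    · simp
  · rw [extv_ge f h]
    apply Finset.sum_eq_zero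
    intro x _
    have : m ≠ (x : ℕ) := by omega
    rw [if_neg this, zero_mul]

lemma sum_indicator_right (f : Fin n → 𝔽) (m : ℕ) :
    ∑ x : Fin n, f x * (if (x : ℕ) = m then (1:𝔽) else 0) = extv f m := by
  rw [← sum_indicator_left f m]
  refine Finset.sum_congr rfl fun x _ => ?_
  have : ((x : ℕ) = m) ↔ (m = (x : ℕ)) := eq_comm
  rw [show (if (x : ℕ) = m then (1:𝔽) else 0) = (if m = (x : ℕ) then (1:𝔽) else 0) from
    if_congr this rfl rfl, mul_comm]

lemma Jpow_apply (k : ℕ) (i j : Fin n) :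
    (Jmat 𝔽 n ^ k) i j = if (i : ℕ) + k = (j : ℕ) then 1 else 0 := by
  induction k generalizing j with
  | zero =>
      simp [Matrix.one_apply, Fin.ext_iff, eq_comm]
  | succ k ih =>
      rw [pow_succ, Matrix.mul_apply]
      have hbody : ∀ m : Fin n, (Jmat 𝔽 n ^ k) i m * Jmat 𝔽 n m j
          = (if (i : ℕ) + k = (m : ℕ) then (1:𝔽) else 0) *
            (if (m : ℕ) + 1 = (j : ℕ) then (1:𝔽) else 0) := fun m => by
        rw [ih, Jmat_apply]
      rw [Finset.sum_congr rfl fun m _ => hbody m]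
      by_cases hj : (i : ℕ) + (k + 1) = (j : ℕ)
      · rw [if_pos hj]
        have hm : (i : ℕ) + k < n := by omega
        rw [Finset.sum_eq_single (⟨(i : ℕ) + k, hm⟩ : Fin n)]
        · have h2 : (i : ℕ) + k + 1 = (j : ℕ) := by omega
          simp [h2]
        · intro b _ hb
          have : (i : ℕ) + k ≠ (b : ℕ) := fun hc => hb (Fin.ext hc.symm)
          rw [if_neg this, zero_mul]
        · simp
      · rw [if_neg hj]
        apply Finset.sum_eq_zero
        intro x _
        by_cases h1 : (i : ℕ) + k = (x : ℕ)
        · have : ¬ ((x : ℕ) + 1 = (j : ℕ)) := by omega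
          rw [if_neg this, mul_zero]
        · rw [if_neg h1, zero_mul]

lemma Jpow_mulVec (k : ℕ) (u : Fin n → 𝔽) (i : Fin n) :
    ((Jmat 𝔽 n ^ k) *ᵥ u) i = extv u ((i : ℕ) + k) := by
  rw [Matrix.mulVec, dotProduct]
  simp only [Jpow_apply]
  exact sum_indicator_left u ((i : ℕ) + k)

/-- The candidate `g`: upper-triangular Toeplitz matrix built from `v`. -/
def Kmat (v : Fin n → 𝔽) : Matrix (Fin n) (Fin n) 𝔽 :=
  Matrix.of fun i j => if (i : ℕ) ≤ (j : ℕ) then extv v ((j : ℕ) - (i : ℕ)) else 0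

lemma Kmat_apply (v : Fin n → 𝔽) (i j : Fin n) :
    Kmat v i j = if (i : ℕ) ≤ (j : ℕ) then extv v ((j : ℕ) - (i : ℕ)) else 0 := rfl

lemma Kmat_comm (v : Fin n → 𝔽) : Kmat v * Jmat 𝔽 n = Jmat 𝔽 n * Kmat v := by
  ext i j
  rw [Matrix.mul_apply, Matrix.mul_apply]
  have hR : ∑ m : Fin n, Jmat 𝔽 n i m * Kmat v m j
      = extv (fun m => Kmat v m j) ((i : ℕ) + 1) := by
    rw [← sum_indicator_left (fun m => Kmat v m j) ((i : ℕ) + 1)]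
    exact Finset.sum_congr rfl fun m _ => by rw [Jmat_apply]
  rw [hR]
  by_cases hj : 1 ≤ (j : ℕ)
  · have hL : ∑ m : Fin n, Kmat v i m * Jmat 𝔽 n m j
        = extv (fun m => Kmat v i m) ((j : ℕ) - 1) := by
      rw [← sum_indicator_right (fun m => Kmat v i m) ((j : ℕ) - 1)]
      refine Finset.sum_congr rfl fun x _ => ?_
      have hiff : ((x : ℕ) + 1 = (j : ℕ)) ↔ ((x : ℕ) = (j : ℕ) - 1) := by omega
      rw [Jmat_apply, show (if (x : ℕ) + 1 = (j : ℕ) then (1:𝔽) else 0)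
        = (if (x : ℕ) = (j : ℕ) - 1 then (1:𝔽) else 0) from if_congr hiff rfl rfl]
    rw [hL]
    have hj1 : (j : ℕ) - 1 < n := by omega
    rw [extv_lt _ hj1]
    by_cases hi1 : (i : ℕ) + 1 < n
    · rw [extv_lt _ hi1]
      show Kmat v i ⟨(j : ℕ) - 1, hj1⟩ = Kmat v ⟨(i : ℕ) + 1, hi1⟩ j
      rw [Kmat_apply, Kmat_apply]
      show (if (i : ℕ) ≤ (j : ℕ) - 1 then extv v ((j : ℕ) - 1 - (i : ℕ)) else 0)
        = if (i : ℕ) + 1 ≤ (j : ℕ) then extv v ((j : ℕ) - ((i : ℕ) + 1)) else 0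
      split_ifs with h1 h2 h2
      · congr 1; omega
      · omega
      · omega
      · rfl
    · rw [extv_ge _ hi1]
      show Kmat v i ⟨(j : ℕ) - 1, hj1⟩ = 0
      rw [Kmat_apply]
      show (if (i : ℕ) ≤ (j : ℕ) - 1 then extv v ((j : ℕ) - 1 - (i : ℕ)) else 0) = 0
      split_ifs with h1
      · apply extv_ge; omega
      · rfl
  · have hL : ∑ m : Fin n, Kmat v i m * Jmat 𝔽 n m j = 0 := by
      apply Finset.sum_eq_zero
      intro x _
      have : ¬ ((x : ℕ) + 1 = (j : ℕ)) := by omega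
      rw [Jmat_apply, if_neg this, mul_zero]
    rw [hL]
    by_cases hi1 : (i : ℕ) + 1 < n
    · rw [extv_lt _ hi1]
      show (0:𝔽) = Kmat v ⟨(i : ℕ) + 1, hi1⟩ j
      rw [Kmat_apply]
      show (0:𝔽) = if (i : ℕ) + 1 ≤ (j : ℕ) then extv v ((j : ℕ) - ((i : ℕ) + 1)) else 0
      rw [if_neg (by omega)]
    · rw [extv_ge _ hi1]

lemma Kmat_mulVec (v u : Fin n → 𝔽) (i : Fin n) :
    (Kmat v *ᵥ u) i = ∑ k ∈ Finset.range (n - (i : ℕ)), extv v k * extv u (k + (i : ℕ)) := by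
  rw [Matrix.mulVec, dotProduct]
  calc ∑ x : Fin n, Kmat v i x * u x
      = ∑ x : Fin n, (fun m : ℕ =>
          (if (i : ℕ) ≤ m then extv v (m - (i : ℕ)) else 0) * extv u m) (x : ℕ) := by
        refine Finset.sum_congr rfl fun x _ => ?_
        simp only [Kmat_apply, extv_lt u x.isLt, Fin.eta]
    _ = ∑ m ∈ Finset.range n,
          (if (i : ℕ) ≤ m then extv v (m - (i : ℕ)) else 0) * extv u m :=
        Fin.sum_univ_eq_sum_range
          (fun m => (if (i : ℕ) ≤ m then extv v (m - (i : ℕ)) else 0) * extv u m) n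
    _ = ∑ m ∈ Finset.Ico (i : ℕ) n,
          (if (i : ℕ) ≤ m then extv v (m - (i : ℕ)) else 0) * extv u m := by
        rw [Finset.range_eq_Ico]
        apply (Finset.sum_subset (Finset.Ico_subset_Ico (Nat.zero_le _) le_rfl) _).symm
        intro x hx hnx
        simp only [Finset.mem_Ico] at hx hnx
        have : ¬ ((i : ℕ) ≤ x) := by omega
        rw [if_neg this, zero_mul]
    _ = ∑ m ∈ Finset.Ico (i : ℕ) n, extv v (m - (i : ℕ)) * extv u m := by
        refine Finset.sum_congr rfl fun x hx => ?_
        simp only [Finset.mem_Ico] at hx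
        rw [if_pos hx.1]
    _ = ∑ k ∈ Finset.range (n - (i : ℕ)),
          extv v ((i : ℕ) + k - (i : ℕ)) * extv u ((i : ℕ) + k) := by
        rw [Finset.sum_Ico_eq_sum_range]
    _ = ∑ k ∈ Finset.range (n - (i : ℕ)), extv v k * extv u (k + (i : ℕ)) := by
        refine Finset.sum_congr rfl fun k _ => ?_
        congr 1
        · congr 1; omega
        · congr 1; omega

lemma y_eq (v u : Fin n → 𝔽) (i : Fin n) :
    v ⬝ᵥ ((Jmat 𝔽 n ^ (i : ℕ)) *ᵥ u)
      = ∑ k ∈ Finset.range (n - (i : ℕ)), extv v k * extv u (k + (i : ℕ)) := by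
  rw [dotProduct]
  calc ∑ k : Fin n, v k * ((Jmat 𝔽 n ^ (i : ℕ)) *ᵥ u) k
      = ∑ k : Fin n, (fun m : ℕ => extv v m * extv u (m + (i : ℕ))) (k : ℕ) := by
        refine Finset.sum_congr rfl fun k _ => ?_
        simp only [Jpow_mulVec, extv_lt v k.isLt, Fin.eta]
    _ = ∑ k ∈ Finset.range n, extv v k * extv u (k + (i : ℕ)) :=
        Fin.sum_univ_eq_sum_range (fun m => extv v m * extv u (m + (i : ℕ))) n
    _ = ∑ k ∈ Finset.range (n - (i : ℕ)), extv v k * extv u (k + (i : ℕ)) := by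
        apply (Finset.sum_subset (Finset.range_subset_range.mpr (by omega)) _).symm
        intro x hx hnx
        simp only [Finset.mem_range] at hx hnx
        rw [extv_ge u (by omega), mul_zero]

end Aux

/-- if `y i = v · J^i · u` and `y (n-1) ≠ 0`, there is `g ∈ GL_n(𝔽)` with
`g J g⁻¹ = J`, `g u = y`, `v g⁻¹ = e₁`. -/
theorem stmt0 {𝔽 : Type*} [Field 𝔽] [IsAlgClosed 𝔽] [CharZero 𝔽]
    {n : ℕ} (hn : 0 < n) (u v y : Fin n → 𝔽)
    (hy : ∀ i : Fin n, y i = v ⬝ᵥ ((Jmat 𝔽 n ^ (i : ℕ)) *ᵥ u))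
    (hyn : y ⟨n - 1, by omega⟩ ≠ 0) :
    ∃ g : Matrix.GeneralLinearGroup (Fin n) 𝔽,
      (g : Matrix (Fin n) (Fin n) 𝔽) * Jmat 𝔽 n * ((g⁻¹ : Matrix.GeneralLinearGroup (Fin n) 𝔽) : Matrix (Fin n) (Fin n) 𝔽) = Jmat 𝔽 n ∧
      (g : Matrix (Fin n) (Fin n) 𝔽) *ᵥ u = y ∧
      v ᵥ* ((g⁻¹ : Matrix.GeneralLinearGroup (Fin n) 𝔽) : Matrix (Fin n) (Fin n) 𝔽) = Pi.single ⟨0, hn⟩ 1 := by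
  classical
  set i0 : Fin n := ⟨0, hn⟩ with hi0
  have hv0 : v i0 ≠ 0 := by
    intro h0
    apply hyn
    rw [hy, y_eq]
    apply Finset.sum_eq_zero
    intro k hk
    simp only [Finset.mem_range] at hk
    have hk0 : k = 0 := by omega
    subst hk0
    rw [extv_lt v hn]
    have : (⟨0, hn⟩ : Fin n) = i0 := rfl
    rw [this, h0, zero_mul]
  have hdet : (Kmat v).det ≠ 0 := by
    have htri : (Kmat v).BlockTriangular id := by
      intro i j hij
      simp only [id] at hij
      rw [Kmat_apply, if_neg (by exact not_le.mpr hij)]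
    rw [Matrix.det_of_upperTriangular htri]
    have hdiag : ∀ i : Fin n, Kmat v i i = v i0 := by
      intro i
      rw [Kmat_apply, if_pos le_rfl, Nat.sub_self, extv_lt v hn]
    rw [Finset.prod_congr rfl fun i _ => hdiag i, Finset.prod_const]
    exact pow_ne_zero _ hv0
  have hK : IsUnit (Kmat v) := by
    rw [Matrix.isUnit_iff_isUnit_det]
    exact isUnit_iff_ne_zero.mpr hdet
  refine ⟨hK.unit, ?_, ?_, ?_⟩
  · have hgK : ((hK.unit : Matrix.GeneralLinearGroup (Fin n) 𝔽) : Matrix (Fin n) (Fin n) 𝔽) = Kmat v := hK.unit_spec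
    have h1 : ((hK.unit : Matrix.GeneralLinearGroup (Fin n) 𝔽) : Matrix (Fin n) (Fin n) 𝔽) *
        ((hK.unit⁻¹ : Matrix.GeneralLinearGroup (Fin n) 𝔽) : Matrix (Fin n) (Fin n) 𝔽) = 1 := by
      rw [← Units.val_mul, mul_inv_cancel, Units.val_one]
    calc (hK.unit : Matrix (Fin n) (Fin n) 𝔽) * Jmat 𝔽 n * ((hK.unit⁻¹ : Matrix.GeneralLinearGroup (Fin n) 𝔽) : Matrix (Fin n) (Fin n) 𝔽)
        = Jmat 𝔽 n * ((hK.unit : Matrix (Fin n) (Fin n) 𝔽) * ((hK.unit⁻¹ : Matrix.GeneralLinearGroup (Fin n) 𝔽) : Matrix (Fin n) (Fin n) 𝔽)) := by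
          rw [hgK, Kmat_comm, Matrix.mul_assoc]
      _ = Jmat 𝔽 n := by rw [h1, Matrix.mul_one]
  · have hgK : ((hK.unit : Matrix.GeneralLinearGroup (Fin n) 𝔽) : Matrix (Fin n) (Fin n) 𝔽) = Kmat v := hK.unit_spec
    rw [hgK]
    funext i
    rw [Kmat_mulVec, hy, y_eq]
  · have hgK : ((hK.unit : Matrix.GeneralLinearGroup (Fin n) 𝔽) : Matrix (Fin n) (Fin n) 𝔽) = Kmat v := hK.unit_spec
    have hv : (Pi.single i0 (1:𝔽)) ᵥ* Kmat v = v := by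
      funext j
      rw [Matrix.vecMul, dotProduct]
      rw [Finset.sum_eq_single i0]
      · rw [Pi.single_eq_same, one_mul, Kmat_apply, if_pos (Nat.zero_le _)]
        rw [Nat.sub_zero, extv_lt v j.isLt, Fin.eta]
      · intro b _ hb
        rw [Pi.single_eq_of_ne hb, zero_mul]
      · simp
    have h1 : ((hK.unit : Matrix.GeneralLinearGroup (Fin n) 𝔽) : Matrix (Fin n) (Fin n) 𝔽) *
        ((hK.unit⁻¹ : Matrix.GeneralLinearGroup (Fin n) 𝔽) : Matrix (Fin n) (Fin n) 𝔽) = 1 := by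
      rw [← Units.val_mul, mul_inv_cancel, Units.val_one]
    calc v ᵥ* ((hK.unit⁻¹ : Matrix.GeneralLinearGroup (Fin n) 𝔽) : Matrix (Fin n) (Fin n) 𝔽)
        = (Pi.single i0 (1:𝔽) ᵥ* Kmat v) ᵥ* ((hK.unit⁻¹ : Matrix.GeneralLinearGroup (Fin n) 𝔽) : Matrix (Fin n) (Fin n) 𝔽) := by rw [hv]
      _ = Pi.single i0 (1:𝔽) ᵥ* (Kmat v * ((hK.unit⁻¹ : Matrix.GeneralLinearGroup (Fin n) 𝔽) : Matrix (Fin n) (Fin n) 𝔽)) := Matrix.vecMul_vecMul _ _ _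
      _ = Pi.single i0 (1:𝔽) ᵥ* (1 : Matrix (Fin n) (Fin n) 𝔽) := by
          rw [hgK] at h1; rw [h1]
      _ = Pi.single i0 1 := Matrix.vecMul_one _
end

section
/- Let X be the 2n×2n matrix in block form X = [[J_n, E_{n-1,n} − E_{n,n-1}],[0, −J_nᵗ]], where J_n is the n×n nilpotent Jordan block and E_{ij} is the n×n matrix unit. Then X^{2n−1} = 0, and for any u = (u_1,…,u_{2n})ᵗ ∈ 𝔽^{2n} with u_{n+1} ≠ 0, the vectors u, Xu, …, X^{2n−2}u are linearly independent. -/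
open Matrix

section aux

variable {𝔽 : Type*} [Field 𝔽] {n : ℕ}

/-- The block matrix of the statement. -/
def Xm (𝔽 : Type*) [Field 𝔽] (n : ℕ) (hn : 2 ≤ n) : Matrix (Fin n ⊕ Fin n) (Fin n ⊕ Fin n) 𝔽 :=
  Matrix.fromBlocks (Jmat 𝔽 n)
    (Matrix.single ⟨n - 2, Nat.sub_lt (Nat.lt_of_lt_of_le two_pos hn) two_pos⟩ ⟨n - 1, Nat.sub_lt (Nat.lt_of_lt_of_le two_pos hn) one_pos⟩ (1 : 𝔽) -
      Matrix.single ⟨n - 1, Nat.sub_lt (Nat.lt_of_lt_of_le two_pos hn) one_pos⟩ ⟨n - 2, Nat.sub_lt (Nat.lt_of_lt_of_le two_pos hn) two_pos⟩ (1 : 𝔽))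
    0 (-(Jmat 𝔽 n)ᵀ)

/-- Weight function: entries of `X` connect weight `w j` to weight `w j + 1`. -/
def wt (n : ℕ) : Fin n ⊕ Fin n → ℕ := Sum.elim (fun j => 2 * n - 2 - (j : ℕ)) (fun j => (j : ℕ))

lemma wt_le (hn : 2 ≤ n) (i : Fin n ⊕ Fin n) : wt n i ≤ 2 * n - 2 := by
  rcases i with i | i <;> simp [wt] <;> omega

lemma Xm_ne (hn : 2 ≤ n) (i j : Fin n ⊕ Fin n) (h : Xm 𝔽 n hn i j ≠ 0) :
    wt n i = wt n j + 1 := by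
  rcases i with i | i <;> rcases j with j | j
  · have hi := i.2; have hj := j.2
    simp only [Xm, fromBlocks_apply₁₁, Jmat, of_apply, ne_eq, ite_eq_right_iff,
      one_ne_zero, imp_false, not_not] at h
    simp [wt]; omega
  · have hi := i.2; have hj := j.2
    simp only [Xm, fromBlocks_apply₁₂, Matrix.single, Matrix.sub_apply, of_apply] at h
    simp only [wt, Sum.elim_inl, Sum.elim_inr]
    split_ifs at h with h1 h2 h2
    · simp only [Fin.ext_iff, Fin.val_mk, true_and, and_true] at h1 h2; omega
    · simp only [Fin.ext_iff, Fin.val_mk, true_and, and_true] at h1; omega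
    · simp only [Fin.ext_iff, Fin.val_mk, true_and, and_true] at h2; omega
    · simp at h
  · simp [Xm] at h
  · have hi := i.2; have hj := j.2
    simp only [Xm, fromBlocks_apply₂₂, Matrix.neg_apply, transpose_apply, Jmat, of_apply, ne_eq,
      neg_eq_zero, ite_eq_right_iff, one_ne_zero, imp_false, not_not] at h
    simp [wt]; omega

lemma Xm_pow_ne (hn : 2 ≤ n) (k : ℕ) :
    ∀ i j : Fin n ⊕ Fin n, (Xm 𝔽 n hn ^ k) i j ≠ 0 → wt n i = wt n j + k := by
  induction k with
  | zero =>
    intro i j h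
    rw [pow_zero] at h
    have : i = j := by by_contra hne; exact h (one_apply_ne hne)
    simp [this]
  | succ k ih =>
    intro i j h
    rw [pow_succ, mul_apply] at h
    obtain ⟨l, -, hl⟩ := Finset.exists_ne_zero_of_sum_ne_zero h
    have h1 : (Xm 𝔽 n hn ^ k) i l ≠ 0 := left_ne_zero_of_mul hl
    have h2 : Xm 𝔽 n hn l j ≠ 0 := right_ne_zero_of_mul hl
    have := ih i l h1
    have := Xm_ne hn l j h2
    omega

lemma Xm_pow_eq_zero (hn : 2 ≤ n) : Xm 𝔽 n hn ^ (2 * n - 1) = 0 := by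
  ext i j
  rw [Matrix.zero_apply]
  by_contra h
  have := Xm_pow_ne hn (2 * n - 1) i j h
  have h1 := wt_le hn i
  omega


variable (hn : 2 ≤ n)

lemma rowR1 (j : Fin n) (hj : (j : ℕ) + 2 < n) :
    Pi.single (Sum.inl j) (1 : 𝔽) ᵥ* Xm 𝔽 n hn =
      Pi.single (Sum.inl (⟨(j : ℕ) + 1, by omega⟩ : Fin n)) 1 := by
  rw [single_vecMul]
  funext c
  rcases c with c | c
  · simp only [one_mul, Xm, fromBlocks_apply₁₁, Jmat, of_apply, Pi.single_apply,
      Sum.inl.injEq, Fin.ext_iff, Fin.val_mk, true_and, and_true]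
    split_ifs <;> first | exact absurd trivial (by assumption) | exact False.elim (by assumption) | (exfalso; omega) | (norm_num <;> omega)
  · simp only [one_mul, Pi.smul_apply, row_apply, smul_eq_mul, Xm, fromBlocks_apply₁₂, Matrix.sub_apply, Matrix.single, of_apply,
      Pi.single_apply, Fin.ext_iff, Fin.val_mk, true_and, and_true]
    have hc := c.2
    split_ifs <;> first | exact absurd trivial (by assumption) | exact False.elim (by assumption) | (exfalso; omega) | (norm_num <;> omega)

lemma rowR2 : Pi.single (Sum.inl (⟨n - 2, Nat.sub_lt (Nat.lt_of_lt_of_le two_pos hn) two_pos⟩ : Fin n)) (1 : 𝔽) ᵥ* Xm 𝔽 n hn =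
    Pi.single (Sum.inl (⟨n - 1, Nat.sub_lt (Nat.lt_of_lt_of_le two_pos hn) one_pos⟩ : Fin n)) 1 +
      Pi.single (Sum.inr (⟨n - 1, Nat.sub_lt (Nat.lt_of_lt_of_le two_pos hn) one_pos⟩ : Fin n)) 1 := by
  rw [single_vecMul]
  funext c
  rcases c with c | c
  · simp only [one_mul, Xm, fromBlocks_apply₁₁, Jmat, of_apply, Pi.add_apply, Pi.single_apply,
      Sum.inl.injEq, Fin.ext_iff, Sum.inr.injEq, Fin.val_mk, true_and, and_true]
    have hc := c.2
    split_ifs <;> first | exact absurd trivial (by assumption) | exact False.elim (by assumption) | (exfalso; omega) | (norm_num <;> omega)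
  · simp only [one_mul, Pi.smul_apply, row_apply, smul_eq_mul, Xm, fromBlocks_apply₁₂, Matrix.sub_apply, Matrix.single, of_apply,
      Pi.add_apply, Pi.single_apply, Sum.inr.injEq, Fin.ext_iff, Fin.val_mk, true_and, and_true]
    have hc := c.2
    split_ifs <;> first | exact absurd trivial (by assumption) | exact False.elim (by assumption) | (exfalso; omega) | (norm_num <;> omega)

lemma rowR3 : Pi.single (Sum.inl (⟨n - 1, Nat.sub_lt (Nat.lt_of_lt_of_le two_pos hn) one_pos⟩ : Fin n)) (1 : 𝔽) ᵥ* Xm 𝔽 n hn =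
    -Pi.single (Sum.inr (⟨n - 2, Nat.sub_lt (Nat.lt_of_lt_of_le two_pos hn) two_pos⟩ : Fin n)) 1 := by
  rw [single_vecMul]
  funext c
  rcases c with c | c
  · simp only [one_mul, Xm, fromBlocks_apply₁₁, Jmat, of_apply, Pi.neg_apply, Pi.single_apply,
      Fin.ext_iff, Fin.val_mk, true_and, and_true]
    have hc := c.2
    split_ifs <;> first | exact absurd trivial (by assumption) | exact False.elim (by assumption) | (exfalso; omega) | (norm_num <;> omega)
  · simp only [one_mul, Pi.smul_apply, row_apply, smul_eq_mul, Xm, fromBlocks_apply₁₂, Matrix.sub_apply, Matrix.single, of_apply,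
      Pi.neg_apply, Pi.single_apply, Sum.inr.injEq, Fin.ext_iff, Fin.val_mk, true_and, and_true]
    have hc := c.2
    split_ifs <;> first | exact absurd trivial (by assumption) | exact False.elim (by assumption) | (exfalso; omega) | (norm_num <;> omega)

lemma rowR4 (j : Fin n) (hj : 1 ≤ (j : ℕ)) :
    Pi.single (Sum.inr j) (1 : 𝔽) ᵥ* Xm 𝔽 n hn =
      -Pi.single (Sum.inr (⟨(j : ℕ) - 1, by omega⟩ : Fin n)) 1 := by
  rw [single_vecMul]
  funext c
  rcases c with c | c
  · simp [Xm]
  · simp only [one_mul, Xm, fromBlocks_apply₂₂, Matrix.neg_apply, transpose_apply, Jmat, of_apply,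
      Pi.neg_apply, Pi.single_apply, Sum.inr.injEq, Fin.ext_iff, Fin.val_mk, true_and, and_true]
    split_ifs <;> first | exact absurd trivial (by assumption) | exact False.elim (by assumption) | (exfalso; omega) | (norm_num <;> omega)

lemma chainA (k : ℕ) (hk : k ≤ n - 2) :
    Pi.single (Sum.inl (⟨0, Nat.lt_of_lt_of_le two_pos hn⟩ : Fin n)) (1 : 𝔽) ᵥ* Xm 𝔽 n hn ^ k =
      Pi.single (Sum.inl (⟨k, by omega⟩ : Fin n)) 1 := by
  induction k with
  | zero => rw [pow_zero, vecMul_one]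
  | succ k ih =>
    rw [pow_succ, ← vecMul_vecMul, ih (by omega),
      rowR1 hn _ ((by omega : k + 2 < n) : ((⟨k, by omega⟩ : Fin n) : ℕ) + 2 < n)]

lemma chainB :
    Pi.single (Sum.inl (⟨0, Nat.lt_of_lt_of_le two_pos hn⟩ : Fin n)) (1 : 𝔽) ᵥ* Xm 𝔽 n hn ^ (n - 1) =
      Pi.single (Sum.inl (⟨n - 1, Nat.sub_lt (Nat.lt_of_lt_of_le two_pos hn) one_pos⟩ : Fin n)) 1 +
        Pi.single (Sum.inr (⟨n - 1, Nat.sub_lt (Nat.lt_of_lt_of_le two_pos hn) one_pos⟩ : Fin n)) 1 := by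
  have h : Xm 𝔽 n hn ^ (n - 1) = Xm 𝔽 n hn ^ (n - 2) * Xm 𝔽 n hn := by
    rw [← pow_succ]; congr 1; omega
  rw [h, ← vecMul_vecMul, chainA hn (n - 2) le_rfl, rowR2 hn]

lemma chainC (t : ℕ) (ht : t ≤ n - 2) :
    Pi.single (Sum.inl (⟨0, Nat.lt_of_lt_of_le two_pos hn⟩ : Fin n)) (1 : 𝔽) ᵥ* Xm 𝔽 n hn ^ (n + t) =
      ((-1 : 𝔽) ^ (t + 1) * 2) •
        (Pi.single (Sum.inr (⟨n - 2 - t, by omega⟩ : Fin n)) 1 : Fin n ⊕ Fin n → 𝔽) := by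
  induction t with
  | zero =>
    have h : Xm 𝔽 n hn ^ (n + 0) = Xm 𝔽 n hn ^ (n - 1) * Xm 𝔽 n hn := by
      rw [← pow_succ]; congr 1; omega
    rw [h, ← vecMul_vecMul, chainB hn, add_vecMul, rowR3 hn,
      rowR4 hn _ ((by omega : 1 ≤ n - 1) : 1 ≤ ((⟨n - 1, Nat.sub_lt (Nat.lt_of_lt_of_le two_pos hn) one_pos⟩ : Fin n) : ℕ))]
    funext c
    rcases c with c | c <;>
      simp only [Pi.add_apply, Pi.neg_apply, Pi.smul_apply, Pi.single_apply, Fin.ext_iff,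
        Fin.val_mk, smul_eq_mul, Sum.inr.injEq] <;>
      split_ifs <;> first | (exfalso; omega) | norm_num
  | succ t ih =>
    have h : Xm 𝔽 n hn ^ (n + (t + 1)) = Xm 𝔽 n hn ^ (n + t) * Xm 𝔽 n hn := by
      rw [← pow_succ]; rfl
    rw [h, ← vecMul_vecMul, ih (by omega), smul_vecMul,
      rowR4 hn _ ((by omega : 1 ≤ n - 2 - t) : 1 ≤ ((⟨n - 2 - t, by omega⟩ : Fin n) : ℕ))]
    funext c
    rcases c with c | c <;>
      simp only [Pi.smul_apply, Pi.neg_apply, Pi.single_apply, Fin.ext_iff, Fin.val_mk,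
        smul_eq_mul, Sum.inr.injEq, pow_succ] <;>
      split_ifs <;> first | (exfalso; omega) | ring

lemma keyRow :
    Pi.single (Sum.inl (⟨0, Nat.lt_of_lt_of_le two_pos hn⟩ : Fin n)) (1 : 𝔽) ᵥ* Xm 𝔽 n hn ^ (2 * n - 2) =
      ((-1 : 𝔽) ^ (n - 1) * 2) •
        (Pi.single (Sum.inr (⟨0, Nat.lt_of_lt_of_le two_pos hn⟩ : Fin n)) 1 : Fin n ⊕ Fin n → 𝔽) := by
  have h1 : 2 * n - 2 = n + (n - 2) := by omega
  have h3 : n - 2 + 1 = n - 1 := by omega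
  rw [h1, chainC hn (n - 2) le_rfl, h3]
  funext c
  rcases c with c | c <;>
    simp only [Pi.smul_apply, Pi.single_apply, smul_eq_mul, Fin.ext_iff, Fin.val_mk,
      Sum.inr.injEq] <;>
    split_ifs <;> first | rfl | (exfalso; omega) | ring

lemma keyCoord (u : Fin n ⊕ Fin n → 𝔽) :
    (Xm 𝔽 n hn ^ (2 * n - 2) *ᵥ u) (Sum.inl (⟨0, Nat.lt_of_lt_of_le two_pos hn⟩ : Fin n)) =
      ((-1 : 𝔽) ^ (n - 1) * 2) * u (Sum.inr (⟨0, Nat.lt_of_lt_of_le two_pos hn⟩ : Fin n)) := by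
  have h := single_dotProduct (Xm 𝔽 n hn ^ (2 * n - 2) *ᵥ u) (1 : 𝔽)
    (Sum.inl (⟨0, Nat.lt_of_lt_of_le two_pos hn⟩ : Fin n))
  rw [one_mul, dotProduct_mulVec, keyRow hn, smul_dotProduct, single_dotProduct, one_mul,
    smul_eq_mul] at h
  exact h.symm

lemma keyNe [CharZero 𝔽] (u : Fin n ⊕ Fin n → 𝔽) (hu : u (Sum.inr (⟨0, Nat.lt_of_lt_of_le two_pos hn⟩ : Fin n)) ≠ 0) :
    Xm 𝔽 n hn ^ (2 * n - 2) *ᵥ u ≠ 0 := by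
  intro h
  have h0 := keyCoord hn u
  rw [h] at h0
  simp only [Pi.zero_apply] at h0
  have h2 : ((-1 : 𝔽) ^ (n - 1) * 2) ≠ 0 := by
    apply mul_ne_zero (pow_ne_zero _ (by norm_num)) two_ne_zero
  rcases mul_eq_zero.mp h0.symm with h' | h'
  · exact h2 h'
  · exact hu h'

/-- Abstract chain independence. -/
lemma chain_li {m : Type*} [Fintype m] [DecidableEq m] (X : Matrix m m 𝔽) (N : ℕ)
    (hN : X ^ N = 0) (u : m → 𝔽) (hu : X ^ (N - 1) *ᵥ u ≠ 0) :
    LinearIndependent 𝔽 (fun i : Fin N => (X ^ (i : ℕ)) *ᵥ u) := by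
  rw [Fintype.linearIndependent_iff]
  intro g hg
  suffices H : ∀ k, ∀ hk : k < N, g ⟨k, hk⟩ = 0 by
    intro i; exact H i.1 i.2
  intro k
  induction k using Nat.strong_induction_on with
  | _ k ih =>
    intro hk
    have h2 : X ^ (N - 1 - k) *ᵥ (∑ i : Fin N, g i • ((X ^ (i : ℕ)) *ᵥ u)) = 0 := by
      rw [hg, Matrix.mulVec_zero]
    have h3 : ∀ i : Fin N, X ^ (N - 1 - k) *ᵥ (g i • ((X ^ (i : ℕ)) *ᵥ u)) =
        g i • ((X ^ (N - 1 - k + (i : ℕ))) *ᵥ u) := by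
      intro i
      rw [Matrix.mulVec_smul, Matrix.mulVec_mulVec, ← pow_add]
    have h4 : X ^ (N - 1 - k) *ᵥ (∑ i : Fin N, g i • ((X ^ (i : ℕ)) *ᵥ u)) =
        ∑ i : Fin N, X ^ (N - 1 - k) *ᵥ (g i • ((X ^ (i : ℕ)) *ᵥ u)) := by
      simp only [← Matrix.mulVecLin_apply]
      exact map_sum _ _ _
    rw [h4] at h2
    simp only [h3] at h2
    rw [Finset.sum_eq_single (⟨k, hk⟩ : Fin N)] at h2
    · have hexp : N - 1 - k + k = N - 1 := by omega
      rw [hexp] at h2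
      rcases smul_eq_zero.mp h2 with h | h
      · exact h
      · exact absurd h hu
    · intro i _ hne
      rcases lt_or_gt_of_ne (fun h : (i : ℕ) = k => hne (Fin.ext h)) with hlt | hgt
      · rw [ih i hlt i.2]; simp
      · have hexp : N - 1 - k + (i : ℕ) = N + ((i : ℕ) - 1 - k) := by omega
        rw [hexp, pow_add, hN, zero_mul, Matrix.zero_mulVec, smul_zero]
    · intro h; exact absurd (Finset.mem_univ _) h

end aux

/-- for `X = [[Jₙ, E_{n-1,n} − E_{n,n-1}],[0, −Jₙᵗ]]` one has `X^{2n-1} = 0`,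
and for any `u` whose `(n+1)`-st coordinate (i.e. `u (Sum.inr 0)`) is nonzero, the vectors
`u, Xu, …, X^{2n-2}u` are linearly independent. -/
theorem stmt4 {𝔽 : Type*} [Field 𝔽] [IsAlgClosed 𝔽] [CharZero 𝔽]
    {n : ℕ} (hn : 2 ≤ n) :
    letI X : Matrix (Fin n ⊕ Fin n) (Fin n ⊕ Fin n) 𝔽 :=
      Matrix.fromBlocks (Jmat 𝔽 n)
        (Matrix.single ⟨n - 2, by omega⟩ ⟨n - 1, by omega⟩ (1 : 𝔽) -
          Matrix.single ⟨n - 1, by omega⟩ ⟨n - 2, by omega⟩ (1 : 𝔽))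
        0 (-(Jmat 𝔽 n)ᵀ)
    X ^ (2 * n - 1) = 0 ∧
      ∀ u : Fin n ⊕ Fin n → 𝔽, u (Sum.inr ⟨0, by omega⟩) ≠ 0 →
        LinearIndependent 𝔽 (fun i : Fin (2 * n - 1) => (X ^ (i : ℕ)) *ᵥ u) := by
  show Xm 𝔽 n hn ^ (2 * n - 1) = 0 ∧ _
  refine ⟨Xm_pow_eq_zero hn, fun u hu => ?_⟩
  have h1 : 2 * n - 1 - 1 = 2 * n - 2 := by omega
  exact chain_li (Xm 𝔽 n hn) (2 * n - 1) (Xm_pow_eq_zero hn) u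
    (by rw [h1]; exact keyNe hn u hu)
end

section
/- Let E be a finite-dimensional vector space over an algebraically closed field 𝔽 of characteristic 0 with a non-degenerate symmetric or skew-symmetric bilinear form, and let X ∈ 𝔤(E), i.e., ⟨Xv,w⟩ + ⟨v,Xw⟩ = 0 for all v,w ∈ E. If the generalized 0-eigenspace E_0 of X is nonzero, then the restriction of the bilinear form to E_0 is non-degenerate. -/
/-- if `X` is skew with respect to a non-degenerate symmetric or
skew-symmetric bilinear form on a finite-dimensional space `E`, and the generalized
`0`-eigenspace `E₀ = {v | X^k v = 0 for some k}` is nonzero, then the restriction of the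
form to `E₀` is non-degenerate. -/
theorem stmt7 {𝔽 : Type*} [Field 𝔽] [IsAlgClosed 𝔽] [CharZero 𝔽]
    {E : Type*} [AddCommGroup E] [Module 𝔽 E] [FiniteDimensional 𝔽 E]
    (B : E →ₗ[𝔽] E →ₗ[𝔽] 𝔽)
    (hsymm_or_skew : (∀ v w : E, B v w = B w v) ∨ (∀ v w : E, B v w = -(B w v)))
    (hBnd : ∀ v : E, (∀ w : E, B v w = 0) → v = 0)
    (X : Module.End 𝔽 E) (hX : ∀ v w : E, B (X v) w + B v (X w) = 0) :
    letI E₀ : Submodule 𝔽 E := ⨆ k : ℕ, LinearMap.ker (X ^ k)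
    E₀ ≠ ⊥ → ∀ v ∈ E₀, (∀ w ∈ E₀, B v w = 0) → v = 0 := by
  intro _ v hv hv0
  -- choose n with Fitting decomposition and ker (X^n) = E₀
  obtain ⟨n, hn⟩ := Filter.eventually_atTop.mp <|
    (X : E →ₗ[𝔽] E).eventually_isCompl_ker_pow_range_pow.and
      (X : E →ₗ[𝔽] E).eventually_iSup_ker_pow_eq
  obtain ⟨hcompl, hker⟩ := hn n le_rfl
  have hvker : v ∈ LinearMap.ker (X ^ n) := by rw [← hker]; exact hv
  have hvn : (X ^ n) v = 0 := hvker
  -- skew relation iterated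
  have key : ∀ (k : ℕ) (u : E), B v ((X ^ k) u) = (-1 : 𝔽) ^ k * B ((X ^ k) v) u := by
    intro k
    induction k with
    | zero => intro u; simp
    | succ k ih =>
      intro u
      have h1 : (X ^ (k + 1)) u = (X ^ k) (X u) := by
        rw [pow_succ]; rfl
      have h2 : (X ^ (k + 1)) v = X ((X ^ k) v) := by
        rw [pow_succ']; rfl
      rw [h1, ih (X u), h2]
      have := hX ((X ^ k) v) u
      have h3 : B ((X ^ k) v) (X u) = -B (X ((X ^ k) v)) u := by linear_combination this
      rw [h3]
      ring
  -- every w splits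
  have hall : ∀ w : E, B v w = 0 := by
    intro w
    have hw : w ∈ LinearMap.ker (X ^ n) ⊔ LinearMap.range (X ^ n) := by
      rw [hcompl.sup_eq_top]; trivial
    obtain ⟨a, ha, b, hb, rfl⟩ := Submodule.mem_sup.mp hw
    obtain ⟨u, rfl⟩ := hb
    have h1 : B v a = 0 := hv0 a (by rw [hker]; exact ha)
    have h2 : B v ((X ^ n) u) = 0 := by
      rw [key n u]
      simp [Module.End.pow_apply] at hvn ⊢
      simp [hvn]
    simp [h1, h2]
  exact hBnd v hall
end

section
/- Let E be a finite-dimensional 𝔽-vector space with a non-degenerate symmetric or skew-symmetric bilinear form, X ∈ 𝔤(E), and c ≠ 0. Then the generalized c-eigenspace E_c and the generalized c'-eigenspace E_{c'} of X are orthogonal whenever c + c' ≠ 0; in particular, the form pairs E_c non-degenerately with E_{−c}, and the restriction of the form to E_c is zero. -/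
private lemma stmt8_orth {𝔽 : Type*} [Field 𝔽]
    {E : Type*} [AddCommGroup E] [Module 𝔽 E]
    (B : E →ₗ[𝔽] E →ₗ[𝔽] 𝔽)
    (X : Module.End 𝔽 E) (hX : ∀ v w : E, B (X v) w + B v (X w) = 0)
    {c c' : 𝔽} (h : c + c' ≠ 0) :
    ∀ n k l : ℕ, k + l ≤ n → ∀ v w : E,
      ((X - c • (1 : Module.End 𝔽 E)) ^ k) v = 0 →
      ((X - c' • (1 : Module.End 𝔽 E)) ^ l) w = 0 → B v w = 0 := by
  intro n
  induction n with
  | zero =>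
    intro k l hkl v w hv hw
    obtain ⟨rfl, rfl⟩ : k = 0 ∧ l = 0 := by omega
    simp only [pow_zero, Module.End.one_apply] at hv
    subst hv; simp
  | succ n ih =>
    intro k l hkl v w hv hw
    match k, l with
    | 0, _ =>
      simp only [pow_zero, Module.End.one_apply] at hv
      subst hv; simp
    | _, 0 =>
      simp only [pow_zero, Module.End.one_apply] at hw
      subst hw; simp
    | k + 1, l + 1 =>
      have hv' : ((X - c • (1 : Module.End 𝔽 E)) ^ k)
          ((X - c • (1 : Module.End 𝔽 E)) v) = 0 := by
        rw [← Module.End.mul_apply, ← pow_succ]; exact hv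
      have hw' : ((X - c' • (1 : Module.End 𝔽 E)) ^ l)
          ((X - c' • (1 : Module.End 𝔽 E)) w) = 0 := by
        rw [← Module.End.mul_apply, ← pow_succ]; exact hw
      have h1 : B ((X - c • (1 : Module.End 𝔽 E)) v) w = 0 :=
        ih k (l + 1) (by omega) _ _ hv' hw
      have h2 : B v ((X - c' • (1 : Module.End 𝔽 E)) w) = 0 :=
        ih (k + 1) l (by omega) _ _ hv hw'
      have hsub : ∀ u : E, (X - c • (1 : Module.End 𝔽 E)) u = X u - c • u := by
        intro u; simp
      have hsub' : ∀ u : E, (X - c' • (1 : Module.End 𝔽 E)) u = X u - c' • u := by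
        intro u; simp
      rw [hsub] at h1
      rw [hsub'] at h2
      have hkey : (c + c') * B v w = 0 := by
        have := hX v w
        simp only [map_sub, map_smul, LinearMap.sub_apply, LinearMap.smul_apply,
          smul_eq_mul] at h1 h2
        linear_combination -h1 - h2 + this
      exact (mul_eq_zero.mp hkey).resolve_left h

/-- let `X` be skew with respect to a non-degenerate symmetric or
skew-symmetric bilinear form on a finite-dimensional space `E`, and let
`E_c = {v | (X − c)^k v = 0 for some k}` denote generalized eigenspaces.  For `c ≠ 0`:
the form pairs `E_c` with `E_{c'}` trivially whenever `c + c' ≠ 0`; it pairs `E_c`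
non-degenerately with `E_{−c}`; and its restriction to `E_c` is zero. -/
theorem stmt8 {𝔽 : Type*} [Field 𝔽] [IsAlgClosed 𝔽] [CharZero 𝔽]
    {E : Type*} [AddCommGroup E] [Module 𝔽 E] [FiniteDimensional 𝔽 E]
    (B : E →ₗ[𝔽] E →ₗ[𝔽] 𝔽)
    (hsymm_or_skew : (∀ v w : E, B v w = B w v) ∨ (∀ v w : E, B v w = -(B w v)))
    (hBnd : ∀ v : E, (∀ w : E, B v w = 0) → v = 0)
    (X : Module.End 𝔽 E) (hX : ∀ v w : E, B (X v) w + B v (X w) = 0)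
    (c : 𝔽) (hc : c ≠ 0) :
    letI Eig : 𝔽 → Submodule 𝔽 E :=
      fun μ => ⨆ k : ℕ, LinearMap.ker ((X - μ • (1 : Module.End 𝔽 E)) ^ k)
    (∀ c' : 𝔽, c + c' ≠ 0 → ∀ v ∈ Eig c, ∀ w ∈ Eig c', B v w = 0) ∧
      (∀ v ∈ Eig c, (∀ w ∈ Eig (-c), B v w = 0) → v = 0) ∧
      (∀ v ∈ Eig c, ∀ w ∈ Eig c, B v w = 0) := by
  set Eig : 𝔽 → Submodule 𝔽 E :=
    fun μ => ⨆ k : ℕ, LinearMap.ker ((X - μ • (1 : Module.End 𝔽 E)) ^ k) with hEigdef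
  have hEig : ∀ μ : 𝔽, Eig μ = X.maxGenEigenspace μ := by
    intro μ
    rw [show Eig μ = ⨆ k : ℕ, LinearMap.ker ((X - μ • (1 : Module.End 𝔽 E)) ^ k) from rfl,
      ← Module.End.iSup_genEigenspace_eq]
    congr 1
    funext k
    ext x
    simp [Module.End.mem_genEigenspace_nat]
  have hmem : ∀ (μ : 𝔽) (v : E), v ∈ Eig μ ↔
      ∃ k : ℕ, ((X - μ • (1 : Module.End 𝔽 E)) ^ k) v = 0 := by
    intro μ v; rw [hEig]; exact X.mem_maxGenEigenspace μ v
  have horth : ∀ c₁ c₂ : 𝔽, c₁ + c₂ ≠ 0 → ∀ v ∈ Eig c₁, ∀ w ∈ Eig c₂, B v w = 0 := by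
    intro c₁ c₂ hne v hv w hw
    obtain ⟨k, hk⟩ := (hmem c₁ v).mp hv
    obtain ⟨l, hl⟩ := (hmem c₂ w).mp hw
    exact stmt8_orth B X hX hne (k + l) k l le_rfl v w hk hl
  refine ⟨fun c' => horth c c', ?_, ?_⟩
  · intro v hv hvperp
    refine hBnd v fun w => ?_
    have htop : ∀ w : E, w ∈ ⨆ μ : 𝔽, X.maxGenEigenspace μ := by
      intro w
      rw [Module.End.iSup_maxGenEigenspace_eq_top]
      trivial
    have : (⨆ μ : 𝔽, X.maxGenEigenspace μ) ≤ LinearMap.ker (B v) := by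
      refine iSup_le fun μ => ?_
      intro w hw
      simp only [LinearMap.mem_ker]
      by_cases hμ : μ = -c
      · subst hμ
        exact hvperp w ((hmem _ w).mpr ((X.mem_maxGenEigenspace _ w).mp hw))
      · exact horth c μ (fun hh => hμ (eq_neg_of_add_eq_zero_right hh)) v hv w
          ((hmem μ w).mpr ((X.mem_maxGenEigenspace μ w).mp hw))
    exact this (htop w)
  · intro v hv w hw
    have : c + c ≠ 0 := by
      intro hcc
      apply hc
      have : (2 : 𝔽) * c = 0 := by linear_combination hcc
      exact (mul_eq_zero.mp this).resolve_left two_ne_zero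
    exact horth c c this v hv w hw
end

section
/- Let G be a reductive algebraic group acting on an affine variety X over an algebraically closed field of characteristic 0, let x ∈ X, and suppose Gx is a closed orbit. If (X_s + X_n, u) is a point of 𝔤 × E lying in a closed G-orbit O, where X_s is semisimple and X_n nilpotent with [X_s, X_n] = 0, then O ∩ ((X_s + 𝒩_{X_s}) × E) = (X_s, 0) + L_{X_s}·(X_n, u), where L_{X_s} is the centralizer of X_s in G and 𝒩_{X_s} is the set of nilpotent elements of 𝔤 commuting with X_s. Consequently L_{X_s}·(X_n, u) is closed in 𝒩_{X_s} × E. -/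
open Matrix

/-- Coordinates of a point of `𝔤𝔩ₘ(𝔽) × 𝔽^k`. -/
def coords {𝔽 : Type*} [Field 𝔽] {m k : ℕ}
    (p : Matrix (Fin m) (Fin m) 𝔽 × (Fin k → 𝔽)) : (Fin m × Fin m) ⊕ Fin k → 𝔽 :=
  Sum.elim (fun ij => p.1 ij.1 ij.2) p.2

/-- A subset of `𝔤𝔩ₘ(𝔽) × 𝔽^k` is Zariski closed if it is the common zero locus of a set
of polynomials in the natural coordinates. -/
def IsZarClosed {𝔽 : Type*} [Field 𝔽] {m k : ℕ}
    (S : Set (Matrix (Fin m) (Fin m) 𝔽 × (Fin k → 𝔽))) : Prop :=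
  ∃ T : Set (MvPolynomial ((Fin m × Fin m) ⊕ Fin k) 𝔽),
    S = {p | ∀ q ∈ T, MvPolynomial.eval (coords p) q = 0}

section Aux

variable {𝔽 : Type*} [Field 𝔽] {m : ℕ}

lemma aeval_units_conj (u : (Matrix (Fin m) (Fin m) 𝔽)ˣ) (A : Matrix (Fin m) (Fin m) 𝔽)
    (p : Polynomial 𝔽) :
    Polynomial.aeval ((u : Matrix (Fin m) (Fin m) 𝔽) * A * ((u⁻¹ : (Matrix (Fin m) (Fin m) 𝔽)ˣ) :
        Matrix (Fin m) (Fin m) 𝔽)) p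
      = (u : Matrix (Fin m) (Fin m) 𝔽) * Polynomial.aeval A p *
        ((u⁻¹ : (Matrix (Fin m) (Fin m) 𝔽)ˣ) : Matrix (Fin m) (Fin m) 𝔽) := by
  induction p using Polynomial.induction_on' with
  | add p q hp hq => rw [map_add, hp, hq, map_add, mul_add, add_mul]
  | monomial n a =>
      rw [Polynomial.aeval_monomial, Polynomial.aeval_monomial, Units.conj_pow,
        ← Algebra.smul_def, ← Algebra.smul_def, mul_smul_comm, smul_mul_assoc]

lemma toLin_isSemisimple_of_diag (Xs : Matrix (Fin m) (Fin m) 𝔽)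
    (hs : ∃ (P : Matrix.GeneralLinearGroup (Fin m) 𝔽) (d : Fin m → 𝔽),
      (P : Matrix (Fin m) (Fin m) 𝔽) * Xs *
        ((P⁻¹ : Matrix.GeneralLinearGroup (Fin m) 𝔽) : Matrix (Fin m) (Fin m) 𝔽)
        = Matrix.diagonal d) :
    Module.End.IsSemisimple (Matrix.toLinAlgEquiv' Xs : Module.End 𝔽 (Fin m → 𝔽)) := by
  classical
  obtain ⟨P, d, hPd⟩ := hs
  set p : Polynomial 𝔽 := ∏ c ∈ Finset.image d Finset.univ, (Polynomial.X - Polynomial.C c)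
    with hp
  have hsep : p.Separable := by
    rw [hp]
    exact Polynomial.separable_prod_X_sub_C_iff'.mpr (fun a _ b _ h => h)
  have hXd : Polynomial.aeval (Matrix.diagonal d) p = 0 := by
    have h1 : Matrix.diagonal d = Matrix.diagonalAlgHom (n := Fin m) (α := 𝔽) 𝔽 d := rfl
    rw [h1, Polynomial.aeval_algHom_apply]
    suffices h2 : Polynomial.aeval d p = 0 by rw [h2, map_zero]
    funext i
    have h3 := Polynomial.aeval_algHom_apply (Pi.evalAlgHom 𝔽 (fun _ : Fin m => 𝔽) i) d p
    have h3' : Polynomial.aeval (d i) p = (Polynomial.aeval d) p i := h3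
    rw [Pi.zero_apply, ← h3', hp, map_prod]
    refine Finset.prod_eq_zero (Finset.mem_image_of_mem d (Finset.mem_univ i)) ?_
    simp
  have hXs : Xs = ((P⁻¹ : Matrix.GeneralLinearGroup (Fin m) 𝔽) : Matrix (Fin m) (Fin m) 𝔽)
      * Matrix.diagonal d * (P : Matrix (Fin m) (Fin m) 𝔽) := by
    rw [← hPd]
    simp only [mul_assoc, Units.inv_mul_cancel_left, Units.inv_mul, mul_one]
  have hz : Polynomial.aeval Xs p = 0 := by
    have hPP : (P : Matrix (Fin m) (Fin m) 𝔽)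
        = (((P⁻¹)⁻¹ : Matrix.GeneralLinearGroup (Fin m) 𝔽) : Matrix (Fin m) (Fin m) 𝔽) := by
      rw [inv_inv]
    rw [hXs, hPP, aeval_units_conj, hXd, mul_zero, zero_mul]
  have h4 := Polynomial.aeval_algHom_apply
    (Matrix.toLinAlgEquiv' (n := Fin m) (R := 𝔽)).toAlgHom Xs p
  refine Module.End.isSemisimple_of_squarefree_aeval_eq_zero hsep.squarefree ?_
  simpa [hz] using h4

lemma end_jordan_unique [CharZero 𝔽] {S S' N N' : Module.End 𝔽 (Fin m → 𝔽)}
    (hS : S.IsSemisimple) (hS' : S'.IsSemisimple)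
    (hN : IsNilpotent N) (hN' : IsNilpotent N')
    (cSN : Commute S N) (cS'N' : Commute S' N') (h : S + N = S' + N') : S = S' := by
  obtain ⟨n, hn, s, hsmem, hnil, hss, hA⟩ :=
    Module.End.exists_isNilpotent_isSemisimple (f := S + N)
  have key : ∀ S₀ N₀ : Module.End 𝔽 (Fin m → 𝔽), S₀.IsSemisimple → IsNilpotent N₀ →
      Commute S₀ N₀ → S₀ + N₀ = S + N → S₀ = s := by
    intro S₀ N₀ h1 h2 h3 h4
    have hca : Commute S₀ (S + N) := by rw [← h4]; exact (Commute.refl S₀).add_right h3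
    have hcs : Commute S₀ s := Algebra.commute_of_mem_adjoin_singleton_of_commute hsmem hca
    have hcn' : Commute N₀ n := by
      have hcb : Commute N₀ (S + N) := by rw [← h4]; exact h3.symm.add_right (Commute.refl N₀)
      exact Algebra.commute_of_mem_adjoin_singleton_of_commute hn hcb
    have hd : S₀ - s = n - N₀ := by
      rw [sub_eq_sub_iff_add_eq_add, h4, hA]
    have hsemi : (S₀ - s).IsSemisimple := Module.End.IsSemisimple.sub_of_commute hcs h1 hss
    have hnil2 : IsNilpotent (S₀ - s) := by
      rw [hd]; exact (hcn'.symm).isNilpotent_sub hnil h2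
    have h0 := Module.End.eq_zero_of_isNilpotent_isSemisimple hnil2 hsemi
    rwa [sub_eq_zero] at h0
  rw [key S N hS hN cSN rfl, key S' N' hS' hN' cS'N' h.symm]

lemma matrix_jordan_unique [CharZero 𝔽] {S S' N N' : Matrix (Fin m) (Fin m) 𝔽}
    (hS : Module.End.IsSemisimple (Matrix.toLinAlgEquiv' S : Module.End 𝔽 (Fin m → 𝔽)))
    (hS' : Module.End.IsSemisimple (Matrix.toLinAlgEquiv' S' : Module.End 𝔽 (Fin m → 𝔽)))
    (hN : IsNilpotent N) (hN' : IsNilpotent N')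
    (cSN : Commute S N) (c' : Commute S' N') (h : S + N = S' + N') : S = S' := by
  apply (Matrix.toLinAlgEquiv' (n := Fin m) (R := 𝔽)).injective
  refine end_jordan_unique hS hS'
    (hN.map (Matrix.toLinAlgEquiv' (n := Fin m) (R := 𝔽)))
    (hN'.map (Matrix.toLinAlgEquiv' (n := Fin m) (R := 𝔽)))
    (cSN.map (Matrix.toLinAlgEquiv' (n := Fin m) (R := 𝔽)))
    (c'.map (Matrix.toLinAlgEquiv' (n := Fin m) (R := 𝔽))) ?_
  rw [← map_add, ← map_add, h]

end Aux

/-- Conjugation action used in `stmt11`. -/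
def mconj {𝔽 : Type*} [Field 𝔽] {m : ℕ} (G : Subgroup (Matrix.GeneralLinearGroup (Fin m) 𝔽))
    (g : G) (A : Matrix (Fin m) (Fin m) 𝔽) : Matrix (Fin m) (Fin m) 𝔽 :=
  ((g : Matrix.GeneralLinearGroup (Fin m) 𝔽) : Matrix (Fin m) (Fin m) 𝔽) * A *
    (((g : Matrix.GeneralLinearGroup (Fin m) 𝔽)⁻¹ :
      Matrix.GeneralLinearGroup (Fin m) 𝔽) : Matrix (Fin m) (Fin m) 𝔽)

theorem stmt11 {𝔽 : Type*} [Field 𝔽] [IsAlgClosed 𝔽] [CharZero 𝔽] {m k : ℕ}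
    (G : Subgroup (Matrix.GeneralLinearGroup (Fin m) 𝔽))
    (ρ : G →* Matrix.GeneralLinearGroup (Fin k) 𝔽)
    (Xs Xn : Matrix (Fin m) (Fin m) 𝔽) (u : Fin k → 𝔽)
    (hs : ∃ (P : Matrix.GeneralLinearGroup (Fin m) 𝔽) (d : Fin m → 𝔽),
      (P : Matrix (Fin m) (Fin m) 𝔽) * Xs *
        ((P⁻¹ : Matrix.GeneralLinearGroup (Fin m) 𝔽) : Matrix (Fin m) (Fin m) 𝔽)
        = Matrix.diagonal d)
    (hXn : IsNilpotent Xn) (hcomm : Commute Xs Xn) :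
    letI conj : G → Matrix (Fin m) (Fin m) 𝔽 → Matrix (Fin m) (Fin m) 𝔽 := fun g A =>
      ((g : Matrix.GeneralLinearGroup (Fin m) 𝔽) : Matrix (Fin m) (Fin m) 𝔽) * A *
        (((g : Matrix.GeneralLinearGroup (Fin m) 𝔽)⁻¹ :
          Matrix.GeneralLinearGroup (Fin m) 𝔽) : Matrix (Fin m) (Fin m) 𝔽)
    letI O : Set (Matrix (Fin m) (Fin m) 𝔽 × (Fin k → 𝔽)) :=
      {p | ∃ g : G, p = (conj g (Xs + Xn), ((ρ g : Matrix.GeneralLinearGroup (Fin k) 𝔽) :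
        Matrix (Fin k) (Fin k) 𝔽) *ᵥ u)}
    letI On : Set (Matrix (Fin m) (Fin m) 𝔽 × (Fin k → 𝔽)) :=
      {q | ∃ g : G, conj g Xs = Xs ∧
        q = (conj g Xn, ((ρ g : Matrix.GeneralLinearGroup (Fin k) 𝔽) :
          Matrix (Fin k) (Fin k) 𝔽) *ᵥ u)}
    letI Nil : Set (Matrix (Fin m) (Fin m) 𝔽) := {Y | IsNilpotent Y ∧ Commute Xs Y}
    IsZarClosed O →
      (O ∩ {p | ∃ Y ∈ Nil, p.1 = Xs + Y} = {p | ∃ q ∈ On, p = (Xs + q.1, q.2)}) ∧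
      ∃ C, IsZarClosed C ∧ On = C ∩ {p | p.1 ∈ Nil} := by
  intro hO
  -- restate everything with `mconj`
  set O : Set (Matrix (Fin m) (Fin m) 𝔽 × (Fin k → 𝔽)) :=
    {p | ∃ g : G, p = (mconj G g (Xs + Xn), ((ρ g : Matrix.GeneralLinearGroup (Fin k) 𝔽) :
      Matrix (Fin k) (Fin k) 𝔽) *ᵥ u)} with hOdef
  set On : Set (Matrix (Fin m) (Fin m) 𝔽 × (Fin k → 𝔽)) :=
    {q | ∃ g : G, mconj G g Xs = Xs ∧
      q = (mconj G g Xn, ((ρ g : Matrix.GeneralLinearGroup (Fin k) 𝔽) :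
        Matrix (Fin k) (Fin k) 𝔽) *ᵥ u)} with hOndef
  set Nil : Set (Matrix (Fin m) (Fin m) 𝔽) := {Y | IsNilpotent Y ∧ Commute Xs Y} with hNildef
  have hO' : IsZarClosed O := hO
  -- basic properties of conjugation
  have conj_add : ∀ (g : G) (A B : Matrix (Fin m) (Fin m) 𝔽),
      mconj G g (A + B) = mconj G g A + mconj G g B := by
    intro g A B; simp [mconj, mul_add, add_mul]
  have conj_mul : ∀ (g : G) (A B : Matrix (Fin m) (Fin m) 𝔽),
      mconj G g A * mconj G g B = mconj G g (A * B) := by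
    intro g A B
    simp only [mconj, mul_assoc, Units.inv_mul_cancel_left]
  have conj_nil : ∀ g : G, IsNilpotent (mconj G g Xn) := by
    intro g
    obtain ⟨n, hn⟩ := hXn
    refine ⟨n, ?_⟩
    simp only [mconj]
    rw [Units.conj_pow, hn, mul_zero, zero_mul]
  have conj_commute : ∀ g : G, Commute (mconj G g Xs) (mconj G g Xn) := by
    intro g
    unfold Commute SemiconjBy
    rw [conj_mul, conj_mul, hcomm]
  have conj_diag : ∀ g : G, ∃ (P : Matrix.GeneralLinearGroup (Fin m) 𝔽) (d : Fin m → 𝔽),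
      (P : Matrix (Fin m) (Fin m) 𝔽) * mconj G g Xs *
        ((P⁻¹ : Matrix.GeneralLinearGroup (Fin m) 𝔽) : Matrix (Fin m) (Fin m) 𝔽)
        = Matrix.diagonal d := by
    intro g
    obtain ⟨P, d, hPd⟩ := hs
    refine ⟨P * ((g : Matrix.GeneralLinearGroup (Fin m) 𝔽))⁻¹, d, ?_⟩
    rw [← hPd]
    simp only [mconj, _root_.mul_inv_rev, inv_inv, Units.val_mul, mul_assoc,
      Units.inv_mul_cancel_left]
  -- part 1
  have part1 : O ∩ {p | ∃ Y ∈ Nil, p.1 = Xs + Y} = {p | ∃ q ∈ On, p = (Xs + q.1, q.2)} := by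
    ext p
    constructor
    · rintro ⟨hpo, hpn⟩
      obtain ⟨g, rfl⟩ := hpo
      obtain ⟨Y, ⟨hYn, hYc⟩, hA⟩ := hpn
      have hsum : mconj G g Xs + mconj G g Xn = Xs + Y := by
        rw [← conj_add]; exact hA
      have hgXs : mconj G g Xs = Xs :=
        matrix_jordan_unique (toLin_isSemisimple_of_diag _ (conj_diag g))
          (toLin_isSemisimple_of_diag _ hs) (conj_nil g) hYn (conj_commute g) hYc hsum
      refine ⟨(mconj G g Xn, ((ρ g : Matrix.GeneralLinearGroup (Fin k) 𝔽) :
          Matrix (Fin k) (Fin k) 𝔽) *ᵥ u), ⟨g, hgXs, rfl⟩, ?_⟩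
      have hc : mconj G g (Xs + Xn) = Xs + mconj G g Xn := by rw [conj_add, hgXs]
      simp [hc]
    · rintro ⟨q, hq, rfl⟩
      obtain ⟨g, hgXs, rfl⟩ := hq
      constructor
      · exact ⟨g, by rw [conj_add, hgXs]⟩
      · exact ⟨mconj G g Xn, ⟨conj_nil g, hgXs ▸ conj_commute g⟩, rfl⟩
  refine ⟨part1, {q | (Xs + q.1, q.2) ∈ O}, ?_, ?_⟩
  · -- Zariski closedness of the translate
    obtain ⟨T, hT⟩ := hO'
    refine ⟨(MvPolynomial.bind₁ (Sum.elim
        (fun ij : Fin m × Fin m => MvPolynomial.X (Sum.inl ij)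
          + MvPolynomial.C (Xs ij.1 ij.2))
        (fun j : Fin k => MvPolynomial.X (Sum.inr j)))) '' T, ?_⟩
    ext q
    have key : ∀ r : MvPolynomial ((Fin m × Fin m) ⊕ Fin k) 𝔽,
        MvPolynomial.eval (coords q) (MvPolynomial.bind₁ (Sum.elim
          (fun ij : Fin m × Fin m => MvPolynomial.X (Sum.inl ij)
            + MvPolynomial.C (Xs ij.1 ij.2))
          (fun j : Fin k => MvPolynomial.X (Sum.inr j))) r)
        = MvPolynomial.eval (coords (Xs + q.1, q.2)) r := by
      intro r
      have h1 : ∀ (x : (Fin m × Fin m) ⊕ Fin k → 𝔽)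
          (r' : MvPolynomial ((Fin m × Fin m) ⊕ Fin k) 𝔽),
          MvPolynomial.eval x r' = MvPolynomial.aeval (R := 𝔽) x r' := by
        intro x r'
        rw [← MvPolynomial.coe_aeval_eq_eval]
        rfl
      rw [h1, MvPolynomial.aeval_bind₁]
      have h2 : (fun i => MvPolynomial.aeval (R := 𝔽) (coords q) ((Sum.elim
          (fun ij : Fin m × Fin m => MvPolynomial.X (Sum.inl ij)
            + MvPolynomial.C (Xs ij.1 ij.2))
          (fun j : Fin k => MvPolynomial.X (Sum.inr j))) i)) = coords (Xs + q.1, q.2) := by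
        funext i
        rcases i with ij | j
        · simp [coords, add_comm]
        · simp [coords]
      rw [h2, ← h1]
    constructor
    · intro hq r hr
      obtain ⟨r₀, hr₀, rfl⟩ := hr
      rw [key r₀]
      have hq2 := hq
      rw [hT] at hq2
      exact hq2 r₀ hr₀
    · intro hq
      show (Xs + q.1, q.2) ∈ O
      rw [hT]
      intro r hr
      rw [← key r]
      exact hq _ ⟨r, hr, rfl⟩
  · -- On = C ∩ Nil'
    show On = {q | (Xs + q.1, q.2) ∈ O} ∩ {p | p.1 ∈ Nil}
    ext q
    constructor
    · rintro ⟨g, hgXs, rfl⟩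
      constructor
      · exact ⟨g, by rw [conj_add, hgXs]⟩
      · exact ⟨conj_nil g, hgXs ▸ conj_commute g⟩
    · rintro ⟨hC, hNq⟩
      have hmem : (Xs + q.1, q.2) ∈ O ∩ {p | ∃ Y ∈ Nil, p.1 = Xs + Y} :=
        ⟨hC, ⟨q.1, hNq, rfl⟩⟩
      rw [part1] at hmem
      obtain ⟨q', hq', heq⟩ := hmem
      have h1 : q.1 = q'.1 := by
        have h3 := congrArg Prod.fst heq
        simpa using add_left_cancel h3
      have h2 : q.2 = q'.2 := by
        have h4 := congrArg Prod.snd heq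
        simpa using h4
      have hqq : q = q' := Prod.ext h1 h2
      rw [hqq]
      exact hq'
end
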